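/- Let Ω ⊊ ℝⁿ be open with 0 ∈ Ωᶜ, and suppose the complement Ωᶜ is a convex cone (i.e. closed under nonnegative scalar multiplication and convex). If x₀ ∈ Ω and y₀ ∈ ∂Ω satisfy d_Ω(x₀) = |x₀ − y₀|, then (−y₀ + Ω) ⊆ Ω and d_Ω(x₀ − y₀) = |x₀ − y₀|. -/

import Mathlib

open scoped Pointwise

/-! A convex set `s` with `2 • s ⊆ s` satisfies `s + s = 2 • s ⊆ s`. Since `y₀ ∈ Ωᶜ`, the closed set
`Ωᶜ` is therefore stable under translation by `y₀`, which gives `-y₀ + Ω ⊆ Ω` and, translating the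
nearest point problem, `d_Ω(x₀) ≤ d_Ω(x₀ - y₀)`; the reverse inequality comes from `0 ∈ Ωᶜ`. -/

theorem Convex.add_mem_of_two_smul_subset {𝕜 E : Type*} [Field 𝕜] [LinearOrder 𝕜]
    [IsStrictOrderedRing 𝕜] [AddCommGroup E] [Module 𝕜 E] {s : Set E} (hs : Convex 𝕜 s)
    (h2 : (2 : 𝕜) • s ⊆ s) {x y : E} (hx : x ∈ s) (hy : y ∈ s) : x + y ∈ s := by
  have hsum : s + s = (2 : 𝕜) • s := by
    rw [← one_add_one_eq_two, hs.add_smul zero_le_one zero_le_one, one_smul]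
  exact h2 (hsum ▸ Set.add_mem_add hx hy)

theorem Metric.infDist_le_infDist_sub_of_add_mem {E : Type*} [SeminormedAddCommGroup E]
    {s : Set E} {y : E} (h : ∀ w ∈ s, w + y ∈ s) (x : E) :
    Metric.infDist x s ≤ Metric.infDist (x - y) s := by
  rcases s.eq_empty_or_nonempty with rfl | hne
  · simp
  have himage : (· + y) '' s ⊆ s := Set.image_subset_iff.mpr h
  calc Metric.infDist x s ≤ Metric.infDist x ((· + y) '' s) :=
        Metric.infDist_le_infDist_of_subset himage (hne.image _)
    _ = Metric.infDist (x - y) s := by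
        simpa using Metric.infDist_image (x := x - y) (t := s) (isometry_add_right y)

theorem translate_subset_and_dist_of_convex_cone_complement_general (n : ℕ)
    (Ω : Set (EuclideanSpace ℝ (Fin n)))
    (hopen : IsOpen Ω)
    (h0 : (0 : EuclideanSpace ℝ (Fin n)) ∈ Ωᶜ)
    (hcone : ∀ t : ℝ, 0 < t → t • Ωᶜ = Ωᶜ) (hconv : Convex ℝ Ωᶜ)
    (x₀ y₀ : EuclideanSpace ℝ (Fin n)) (hy₀ : y₀ ∈ frontier Ω)
    (hd : Metric.infDist x₀ Ωᶜ = ‖x₀ - y₀‖) :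
    (∀ z ∈ Ω, -y₀ + z ∈ Ω) ∧ Metric.infDist (x₀ - y₀) Ωᶜ = ‖x₀ - y₀‖ := by
  have hy₀c : y₀ ∈ Ωᶜ := (hopen.frontier_eq ▸ hy₀).2
  have hadd : ∀ w ∈ Ωᶜ, w + y₀ ∈ Ωᶜ := fun w hw =>
    hconv.add_mem_of_two_smul_subset (hcone 2 two_pos).subset hw hy₀c
  refine ⟨fun z hz => ?_, le_antisymm ?_ ?_⟩
  · by_contra hz'
    exact (by simpa using hadd _ hz' : z ∉ Ω) hz
  · simpa [dist_eq_norm] using Metric.infDist_le_dist_of_mem (x := x₀ - y₀) h0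
  · exact hd ▸ Metric.infDist_le_infDist_sub_of_add_mem hadd x₀

/-- If `Ωᶜ` is a convex cone containing `0`, `x₀ ∈ Ω`, and `y₀ ∈ ∂Ω` realizes the distance
from `x₀` to `Ωᶜ`, then `-y₀ + Ω ⊆ Ω` and `d_Ω(x₀ - y₀) = |x₀ - y₀|`. -/
theorem translate_subset_and_dist_of_convex_cone_complement (n : ℕ)
    (Ω : Set (EuclideanSpace ℝ (Fin n)))
    (hopen : IsOpen Ω) (hproper : Ω ≠ Set.univ)
    (h0 : (0 : EuclideanSpace ℝ (Fin n)) ∈ Ωᶜ)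
    (hcone : ∀ t : ℝ, 0 < t → t • Ωᶜ = Ωᶜ) (hconv : Convex ℝ Ωᶜ)
    (x₀ y₀ : EuclideanSpace ℝ (Fin n)) (hx₀ : x₀ ∈ Ω) (hy₀ : y₀ ∈ frontier Ω)
    (hd : Metric.infDist x₀ Ωᶜ = ‖x₀ - y₀‖) :
    (∀ z ∈ Ω, -y₀ + z ∈ Ω) ∧ Metric.infDist (x₀ - y₀) Ωᶜ = ‖x₀ - y₀‖ :=
  translate_subset_and_dist_of_convex_cone_complement_general n Ω hopen h0 hcone hconv x₀ y₀ hy₀ hd
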